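/- arXiv:0908.0506 — 3 statements merged into one kernel-verified Lean document; each statement's English description precedes it below -/
import Mathlib

section
/- A weight vector r is an optimal solution of the approximate linear program (maximize ν^⊤Φr subject to Φr ≤ TΦr) if and only if r is an optimal solution of the program: minimize ||J* − Φr||_{1,ν} subject to Φr ≤ TΦr. In particular, for every r with Φr ≤ TΦr one has ||J* − Φr||_{1,ν} = ν^⊤(J* − Φr). -/
open Finset Matrix

noncomputable section

/-- The Bellman operator. -/
def bellmanT {X A : Type*} [Fintype X] [Fintype A] [Nonempty A]
    (g : X → A → ℝ) (P : A → X → X → ℝ) (α : ℝ) (J : X → ℝ) : X → ℝ :=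
  fun x => Finset.univ.inf' Finset.univ_nonempty fun a => g x a + α * ∑ x', P a x x' * J x'

/-- The Bellman operator of a stationary policy. -/
def polT {X A : Type*} [Fintype X]
    (g : X → A → ℝ) (P : A → X → X → ℝ) (α : ℝ) (μ : X → A) (J : X → ℝ) : X → ℝ :=
  fun x => g x (μ x) + α * ∑ x', P (μ x) x x' * J x'

/-- Transition matrix of a stationary policy. -/
def polMat {X A : Type*} (P : A → X → X → ℝ) (μ : X → A) : Matrix X X ℝ :=
  Matrix.of fun x x' => P (μ x) x x'

/-- Δ_μ = Σ_k (α P_μ)^k = (I - α P_μ)⁻¹. -/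
def deltaMat {X A : Type*} [Fintype X] [DecidableEq X]
    (P : A → X → X → ℝ) (α : ℝ) (μ : X → A) : Matrix X X ℝ :=
  ∑' k : ℕ, (α • polMat P μ) ^ k

/-- π_{μ,ν} = (1-α) ν^⊤ (I - α P_μ)⁻¹. -/
def piDist {X A : Type*} [Fintype X] [DecidableEq X]
    (P : A → X → X → ℝ) (α : ℝ) (μ : X → A) (ν : X → ℝ) : X → ℝ :=
  fun x => (1 - α) * ∑ x0, ν x0 * deltaMat P α μ x0 x

/-- Cost-to-go of policy μ: Σ_t α^t P_μ^t g_μ. -/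
def Jpol {X A : Type*} [Fintype X] [DecidableEq X]
    (g : X → A → ℝ) (P : A → X → X → ℝ) (α : ℝ) (μ : X → A) : X → ℝ :=
  fun x => ∑' t : ℕ, α ^ t * (((polMat P μ) ^ t) *ᵥ (fun y => g y (μ y))) x

/-- Linear combination of basis functions. -/
def phiR {X : Type*} {K : ℕ} (Φ : X → Fin K → ℝ) (r : Fin K → ℝ) : X → ℝ :=
  fun x => ∑ i, Φ x i * r i

/-- ν-weighted 1-norm. -/
def wnorm1 {X : Type*} [Fintype X] (ν J : X → ℝ) : ℝ := ∑ x, ν x * |J x|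

/-- Max norm. -/
def supNorm {X : Type*} [Fintype X] [Nonempty X] (J : X → ℝ) : ℝ :=
  Finset.univ.sup' Finset.univ_nonempty fun x => |J x|

/-- ψ-weighted max norm ‖J‖_{∞,1/ψ}. -/
def wsupNorm {X : Type*} [Fintype X] [Nonempty X] (ψ J : X → ℝ) : ℝ :=
  Finset.univ.sup' Finset.univ_nonempty fun x => |J x| / ψ x

/-- β(ψ) = max_{x,a} (Σ_{x'} P_a(x,x') ψ(x')) / ψ(x). -/
def betaPsi {X A : Type*} [Fintype X] [Nonempty X] [Fintype A] [Nonempty A]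
    (P : A → X → X → ℝ) (ψ : X → ℝ) : ℝ :=
  Finset.univ.sup' Finset.univ_nonempty fun p : X × A => (∑ x', P p.2 p.1 x' * ψ x') / ψ p.1

/-- Feasible values of the LP defining ℓ(r,θ). -/
def ellSet {X A : Type*} [Fintype X] [Fintype A] [Nonempty A] {K : ℕ}
    (g : X → A → ℝ) (P : A → X → X → ℝ) (α : ℝ) (π : X → ℝ)
    (Φ : X → Fin K → ℝ) (r : Fin K → ℝ) (θ : ℝ) : Set ℝ :=
  {v | ∃ (s : X → ℝ) (γ : ℝ), v = γ / (1 - α) ∧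
    (∀ x, phiR Φ r x - bellmanT g P α (phiR Φ r) x ≤ s x + γ) ∧
    (∑ x, π x * s x ≤ θ) ∧ (∀ x, 0 ≤ s x)}

/-- ℓ(r,θ): optimal value of the LP (3.2). -/
def ellVal {X A : Type*} [Fintype X] [Fintype A] [Nonempty A] {K : ℕ}
    (g : X → A → ℝ) (P : A → X → X → ℝ) (α : ℝ) (π : X → ℝ)
    (Φ : X → Fin K → ℝ) (r : Fin K → ℝ) (θ : ℝ) : ℝ :=
  sInf (ellSet g P α π Φ r θ)

/-!
A subsolution `J ≤ T J` of Bellman's equation lies below `J*`: if `C = max (J - J*)` then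
monotonicity of `T` and `T (J + c) = T J + α c` give `J ≤ T J ≤ T (J* + C) = J* + α C`, so `C ≤ α C`,
i.e. `C ≤ 0`. Hence for every ALP-feasible `r` the error `J* - Φr` is nonnegative,
`‖J* - Φr‖_{1,ν} = ν^⊤ J* - ν^⊤ Φr`, and minimizing it over the feasible set is the same as
maximizing `ν^⊤ Φr`.
-/

lemma sum_mul_le_sum_mul_add {ι : Type*} [Fintype ι] {w J J' : ι → ℝ} {c : ℝ}
    (hw0 : ∀ i, 0 ≤ w i) (hw1 : ∑ i, w i = 1) (h : ∀ i, J i ≤ J' i + c) :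
    ∑ i, w i * J i ≤ ∑ i, w i * J' i + c :=
  calc ∑ i, w i * J i ≤ ∑ i, w i * (J' i + c) :=
        sum_le_sum fun i _ => mul_le_mul_of_nonneg_left (h i) (hw0 i)
    _ = ∑ i, w i * J' i + c := by simp only [mul_add, sum_add_distrib, ← sum_mul, hw1, one_mul]

section Bellman

variable {X A : Type*} [Fintype X] [Fintype A] [Nonempty A]
  {g : X → A → ℝ} {P : A → X → X → ℝ} {α : ℝ}

lemma bellmanT_le_add_const (hα0 : 0 ≤ α) (hP0 : ∀ a x x', 0 ≤ P a x x')
    (hP1 : ∀ a x, ∑ x', P a x x' = 1) {J J' : X → ℝ} {c : ℝ} (h : ∀ x, J x ≤ J' x + c) (x : X) :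
    bellmanT g P α J x ≤ bellmanT g P α J' x + α * c := by
  have hstep : ∀ a, g x a + α * ∑ x', P a x x' * J x' ≤
      g x a + α * ∑ x', P a x x' * J' x' + α * c := fun a => by
    nlinarith [sum_mul_le_sum_mul_add (hP0 a x) (hP1 a x) h]
  rw [← sub_le_iff_le_add]
  refine le_inf' _ _ fun a _ => sub_le_iff_le_add.2 ?_
  exact (inf'_le _ (mem_univ a)).trans (hstep a)

lemma le_of_le_bellmanT [Nonempty X] (hα0 : 0 ≤ α) (hα1 : α < 1)
    (hP0 : ∀ a x x', 0 ≤ P a x x') (hP1 : ∀ a x, ∑ x', P a x x' = 1)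
    {J Jstar : X → ℝ} (hJstar : bellmanT g P α Jstar = Jstar)
    (hJ : ∀ x, J x ≤ bellmanT g P α J x) (x : X) : J x ≤ Jstar x := by
  obtain ⟨x₀, -, hx₀⟩ := exists_max_image univ (fun x => J x - Jstar x) univ_nonempty
  set C := J x₀ - Jstar x₀
  have hC : ∀ x, J x ≤ Jstar x + C := fun x => by linarith [hx₀ x (mem_univ x)]
  have hCα : C ≤ α * C := by
    have := (hJ x₀).trans (bellmanT_le_add_const hα0 hP0 hP1 hC x₀)
    rw [hJstar] at this
    linarith
  have hC0 : C ≤ 0 := by nlinarith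
  linarith [hC x]

end Bellman

lemma wnorm1_eq_sum_of_nonneg {X : Type*} [Fintype X] {ν J : X → ℝ} (hJ : ∀ x, 0 ≤ J x) :
    wnorm1 ν J = ∑ x, ν x * J x :=
  sum_congr rfl fun x _ => by rw [abs_of_nonneg (hJ x)]

theorem alp_equiv_min_one_norm_general
    {X A : Type*} [Fintype X] [Nonempty X] [Fintype A] [Nonempty A] {K : ℕ}
    (g : X → A → ℝ) (P : A → X → X → ℝ) (α : ℝ)
    (hα0 : 0 < α) (hα1 : α < 1)
    (hP0 : ∀ a x x', 0 ≤ P a x x') (hP1 : ∀ a x, ∑ x', P a x x' = 1)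
    (Jstar : X → ℝ) (hJstar : bellmanT g P α Jstar = Jstar)
    (Φ : X → Fin K → ℝ) (ν : X → ℝ) :
    (∀ r : Fin K → ℝ, (∀ x, phiR Φ r x ≤ bellmanT g P α (phiR Φ r) x) →
      wnorm1 ν (fun x => Jstar x - phiR Φ r x) = ∑ x, ν x * (Jstar x - phiR Φ r x)) ∧
    (∀ r : Fin K → ℝ,
      ((∀ x, phiR Φ r x ≤ bellmanT g P α (phiR Φ r) x) ∧
        (∀ r' : Fin K → ℝ, (∀ x, phiR Φ r' x ≤ bellmanT g P α (phiR Φ r') x) →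
          ∑ x, ν x * phiR Φ r' x ≤ ∑ x, ν x * phiR Φ r x))
      ↔
      ((∀ x, phiR Φ r x ≤ bellmanT g P α (phiR Φ r) x) ∧
        (∀ r' : Fin K → ℝ, (∀ x, phiR Φ r' x ≤ bellmanT g P α (phiR Φ r') x) →
          wnorm1 ν (fun x => Jstar x - phiR Φ r x) ≤
            wnorm1 ν (fun x => Jstar x - phiR Φ r' x)))) := by
  have hnorm : ∀ r : Fin K → ℝ, (∀ x, phiR Φ r x ≤ bellmanT g P α (phiR Φ r) x) →
      wnorm1 ν (fun x => Jstar x - phiR Φ r x) = ∑ x, ν x * (Jstar x - phiR Φ r x) :=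
    fun r hr => wnorm1_eq_sum_of_nonneg fun x =>
      sub_nonneg.2 (le_of_le_bellmanT hα0.le hα1 hP0 hP1 hJstar hr x)
  refine ⟨hnorm, fun r => and_congr_right fun hr => forall₂_congr fun r' hr' => ?_⟩
  rw [hnorm r hr, hnorm r' hr']
  simp only [mul_sub, sum_sub_distrib, sub_le_sub_iff_left]

/-- r is optimal for the ALP iff it is optimal for the program minimizing
‖J* - Φr‖_{1,ν} subject to Φr ≤ TΦr; and for every feasible r,
‖J* - Φr‖_{1,ν} = ν^⊤(J* - Φr). -/
theorem alp_equiv_min_one_norm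
    {X A : Type*} [Fintype X] [Nonempty X] [Fintype A] [Nonempty A] {K : ℕ}
    (g : X → A → ℝ) (P : A → X → X → ℝ) (α : ℝ)
    (hα0 : 0 < α) (hα1 : α < 1)
    (hP0 : ∀ a x x', 0 ≤ P a x x') (hP1 : ∀ a x, ∑ x', P a x x' = 1)
    (Jstar : X → ℝ) (hJstar : bellmanT g P α Jstar = Jstar)
    (Φ : X → Fin K → ℝ) (ν : X → ℝ)
    (hν0 : ∀ x, 0 ≤ ν x) (hν1 : ∑ x, ν x = 1) :
    (∀ r : Fin K → ℝ, (∀ x, phiR Φ r x ≤ bellmanT g P α (phiR Φ r) x) →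
      wnorm1 ν (fun x => Jstar x - phiR Φ r x) = ∑ x, ν x * (Jstar x - phiR Φ r x)) ∧
    (∀ r : Fin K → ℝ,
      ((∀ x, phiR Φ r x ≤ bellmanT g P α (phiR Φ r) x) ∧
        (∀ r' : Fin K → ℝ, (∀ x, phiR Φ r' x ≤ bellmanT g P α (phiR Φ r') x) →
          ∑ x, ν x * phiR Φ r' x ≤ ∑ x, ν x * phiR Φ r x))
      ↔
      ((∀ x, phiR Φ r x ≤ bellmanT g P α (phiR Φ r) x) ∧
        (∀ r' : Fin K → ℝ, (∀ x, phiR Φ r' x ≤ bellmanT g P α (phiR Φ r') x) →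
          wnorm1 ν (fun x => Jstar x - phiR Φ r x) ≤
            wnorm1 ν (fun x => Jstar x - phiR Φ r' x)))) :=
  alp_equiv_min_one_norm_general g P α hα0 hα1 hP0 hP1 Jstar hJstar Φ ν
end
end

section
/- Fix r ∈ ℝ^K, let Ω(r) = argmax_{x∈𝒳} (Φr(x) − TΦr(x)), and assume π_{μ*,ν}(Ω(r)) > 0. Then the right partial derivative of ℓ(r,θ) in θ at θ = 0 equals −((1−α) Σ_{x∈Ω(r)} π_{μ*,ν}(x))^{−1}; in fact, for all sufficiently small δ ≥ 0, ℓ(r,δ) = ℓ(r,0) − δ/((1−α) Σ_{x∈Ω(r)} π_{μ*,ν}(x)). -/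
open Finset Matrix

noncomputable section

/-! For small `θ ≥ 0` the LP defining `ℓ(r, θ)` is solved explicitly. With `F := Φr - TΦr` and
`Ω` its argmax, spending the slack budget `θ` uniformly on `Ω` lowers the level `γ` from `max F`
to `max F - θ / π(Ω)`; this stays feasible until the level reaches the largest value of `F` off
`Ω`, and the dual solution `π|_Ω` shows by weak duality that nothing better is possible. So
`ℓ(r, ·)` is affine with slope `-1 / ((1 - α) π(Ω))` on some interval `[0, δ₀]`. -/

section Discounting

variable {X A : Type*} [Fintype X] [DecidableEq X]

theorem deltaMat_nonneg {P : A → X → X → ℝ} {α : ℝ} (hα : 0 ≤ α)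
    (hP : ∀ a x x', 0 ≤ P a x x') (μ : X → A) (x y : X) : 0 ≤ deltaMat P α μ x y := by
  have hterm : ∀ k, (0 : X → X → ℝ) ≤ (α • polMat P μ) ^ k := fun k x y =>
    pow_apply_nonneg (fun x y => mul_nonneg hα (hP _ _ _)) k x y
  -- no summability is needed: a non-summable `tsum` is `0`
  exact tsum_nonneg hterm x y

theorem piDist_nonneg {P : A → X → X → ℝ} {α : ℝ} (hα0 : 0 ≤ α) (hα1 : α ≤ 1)
    (hP : ∀ a x x', 0 ≤ P a x x') (μ : X → A) {ν : X → ℝ} (hν : ∀ x, 0 ≤ ν x) (x : X) :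
    0 ≤ piDist P α μ ν x :=
  mul_nonneg (sub_nonneg.2 hα1) <| sum_nonneg fun x0 _ =>
    mul_nonneg (hν x0) (deltaMat_nonneg hα0 hP μ x0 x)

end Discounting

open Topology

section SlackLP

variable {X : Type*} [Fintype X] {F π : X → ℝ} {α θ : ℝ} {x₀ : X}

def argmaxSet (F : X → ℝ) : Set X := {y | ∀ y', F y' ≤ F y}

def argmaxMass (F π : X → ℝ) : ℝ := ∑ x, (argmaxSet F).indicator π x

/-- `ellSet` is the case `F = Φr - TΦr`. -/
def slackLPValues (F π : X → ℝ) (α θ : ℝ) : Set ℝ :=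
  {v | ∃ (s : X → ℝ) (γ : ℝ), v = γ / (1 - α) ∧
    (∀ x, F x ≤ s x + γ) ∧ (∑ x, π x * s x ≤ θ) ∧ (∀ x, 0 ≤ s x)}

theorem exists_mem_argmaxSet_of_argmaxMass_pos
    (hp : 0 < argmaxMass F π) : ∃ x₀, x₀ ∈ argmaxSet F := by
  obtain ⟨x₀, -, hx₀⟩ := exists_ne_zero_of_sum_ne_zero hp.ne'
  exact ⟨x₀, Set.mem_of_indicator_ne_zero hx₀⟩

theorem exists_pos_add_le_of_notMem_argmaxSet (hx₀ : x₀ ∈ argmaxSet F) :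
    ∃ ε > 0, ∀ y ∉ argmaxSet F, F y + ε ≤ F x₀ := by
  have hlt : ∀ y ∉ argmaxSet F, F y < F x₀ := fun y hy => by
    obtain ⟨y', hy'⟩ := not_forall.1 hy
    exact (lt_of_not_ge hy').trans_le (hx₀ y')
  have hev : ∀ y, ∀ᶠ ε in 𝓝[>] (0 : ℝ), y ∉ argmaxSet F → F y + ε ≤ F x₀ := fun y => by
    by_cases hy : y ∈ argmaxSet F
    · exact Filter.Eventually.of_forall fun _ h => absurd hy h
    · filter_upwards [nhdsWithin_le_nhds (eventually_le_nhds (sub_pos.2 (hlt y hy)))]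
        with ε hε _
      linarith
  obtain ⟨ε, hε, hgap⟩ := ((Filter.eventually_all.2 hev).and self_mem_nhdsWithin).exists
  exact ⟨ε, hgap, hε⟩

/-- Weak duality: `π` restricted to the argmax of `F` is a dual solution. -/
theorem le_of_mem_slackLPValues (hπ : ∀ x, 0 ≤ π x) (hα : α < 1) (hp : 0 < argmaxMass F π)
    (x₀ : X) : ∀ v ∈ slackLPValues F π α θ, (F x₀ - θ / argmaxMass F π) / (1 - α) ≤ v := by
  rintro v ⟨s, γ, rfl, hFs, hθ, hs⟩
  have hterm : ∀ x, (argmaxSet F).indicator π x * F x₀ ≤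
      π x * s x + (argmaxSet F).indicator π x * γ := fun x => by
    by_cases hx : x ∈ argmaxSet F
    · simp only [Set.indicator_of_mem hx]
      rw [← mul_add]
      exact mul_le_mul_of_nonneg_left ((hx x₀).trans (hFs x)) (hπ x)
    · simp only [Set.indicator_of_notMem hx, zero_mul, add_zero]
      exact mul_nonneg (hπ x) (hs x)
  have hdual : argmaxMass F π * F x₀ ≤ θ + argmaxMass F π * γ := calc
    argmaxMass F π * F x₀ = ∑ x, (argmaxSet F).indicator π x * F x₀ := sum_mul _ _ _
    _ ≤ ∑ x, (π x * s x + (argmaxSet F).indicator π x * γ) := sum_le_sum fun x _ => hterm x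
    _ = ∑ x, π x * s x + argmaxMass F π * γ := by rw [sum_add_distrib, ← sum_mul]; rfl
    _ ≤ θ + argmaxMass F π * γ := by linarith
  have hγ : F x₀ - θ / argmaxMass F π ≤ γ := by
    rw [sub_le_comm, le_div_iff₀ hp]
    linarith
  exact div_le_div_of_nonneg_right hγ (by linarith)

/-- The primal solution: the whole slack budget `θ` is spent uniformly on the argmax of `F`,
which is feasible as long as it does not lift the argmax above the other values of `F`. -/
theorem mem_slackLPValues (hx₀ : x₀ ∈ argmaxSet F) (hθ : 0 ≤ θ) (hp : 0 < argmaxMass F π)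
    (hgap : ∀ y ∉ argmaxSet F, F y + θ / argmaxMass F π ≤ F x₀) :
    (F x₀ - θ / argmaxMass F π) / (1 - α) ∈ slackLPValues F π α θ := by
  set c := θ / argmaxMass F π
  refine ⟨(argmaxSet F).indicator fun _ => c, F x₀ - c, rfl, fun x => ?_, ?_, fun x => ?_⟩
  · by_cases hx : x ∈ argmaxSet F
    · simp only [Set.indicator_of_mem hx]
      linarith [hx₀ x]
    · simp only [Set.indicator_of_notMem hx]
      linarith [hgap x hx]
  · have hterm : ∀ x, π x * (argmaxSet F).indicator (fun _ => c) x =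
        (argmaxSet F).indicator π x * c := fun x => by
      by_cases hx : x ∈ argmaxSet F <;> simp [hx]
    rw [sum_congr rfl fun x _ => hterm x, ← sum_mul]
    exact (mul_div_cancel₀ θ hp.ne').le
  · exact Set.indicator_nonneg (fun _ _ => div_nonneg hθ hp.le) x

theorem isLeast_slackLPValues (hπ : ∀ x, 0 ≤ π x) (hα : α < 1) (hx₀ : x₀ ∈ argmaxSet F)
    (hθ : 0 ≤ θ) (hp : 0 < argmaxMass F π)
    (hgap : ∀ y ∉ argmaxSet F, F y + θ / argmaxMass F π ≤ F x₀) :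
    IsLeast (slackLPValues F π α θ)
      ((F x₀ - θ / argmaxMass F π) / (1 - α)) :=
  ⟨mem_slackLPValues hx₀ hθ hp hgap, le_of_mem_slackLPValues hπ hα hp x₀⟩

end SlackLP

theorem hasDerivWithinAt_Ici_of_eq_affine {f : ℝ → ℝ} {m a b : ℝ} (hab : a < b)
    (hf : ∀ x ∈ Set.Icc a b, f x = f a + m * (x - a)) : HasDerivWithinAt f m (Set.Ici a) a := by
  have hline : HasDerivAt (fun x => f a + m * (x - a)) m a := by
    simpa using (((hasDerivAt_id a).sub_const a).const_mul m).const_add (f a)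
  exact hline.hasDerivWithinAt.congr_of_eventuallyEq
    (Filter.mem_of_superset (Icc_mem_nhdsGE hab) hf) (by simp)

theorem ell_right_derivative_at_zero_general
    {X A : Type*} [Fintype X] [Fintype A] [Nonempty A] [DecidableEq X] {K : ℕ}
    (g : X → A → ℝ) (P : A → X → X → ℝ) (α : ℝ)
    (hα0 : 0 < α) (hα1 : α < 1)
    (hP0 : ∀ a x x', 0 ≤ P a x x')
    (μs : X → A)
    (ν : X → ℝ) (hν0 : ∀ x, 0 ≤ ν x)
    (Φ : X → Fin K → ℝ) (r : Fin K → ℝ)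
    -- Ω(r) = argmax_x (Φr(x) - TΦr(x)), and its π_{μ*,ν}-probability:
    (pOmega : ℝ)
    (hpOmega : pOmega = ∑ x, Set.indicator
      {y | ∀ y', phiR Φ r y' - bellmanT g P α (phiR Φ r) y' ≤
                 phiR Φ r y - bellmanT g P α (phiR Φ r) y}
      (piDist P α μs ν) x)
    (hpos : 0 < pOmega) :
    HasDerivWithinAt (fun θ => ellVal g P α (piDist P α μs ν) Φ r θ)
      (-((1 - α) * pOmega)⁻¹) (Set.Ici 0) 0 ∧
    ∃ δ₀ > 0, ∀ δ : ℝ, 0 ≤ δ → δ ≤ δ₀ →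
      ellVal g P α (piDist P α μs ν) Φ r δ =
        ellVal g P α (piDist P α μs ν) Φ r 0 - δ / ((1 - α) * pOmega) := by
  set F : X → ℝ := fun x => phiR Φ r x - bellmanT g P α (phiR Φ r) x
  set π := piDist P α μs ν
  have hπ : ∀ x, 0 ≤ π x := piDist_nonneg hα0.le hα1.le hP0 μs hν0
  change pOmega = argmaxMass F π at hpOmega
  subst hpOmega
  obtain ⟨x₀, hx₀⟩ := exists_mem_argmaxSet_of_argmaxMass_pos hpos
  obtain ⟨ε, hε, hgap⟩ := exists_pos_add_le_of_notMem_argmaxSet hx₀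
  have hval : ∀ δ, 0 ≤ δ → δ ≤ ε * argmaxMass F π →
      ellVal g P α π Φ r δ = (F x₀ - δ / argmaxMass F π) / (1 - α) := fun δ hδ0 hδε => by
    refine (isLeast_slackLPValues hπ hα1 hx₀ hδ0 hpos fun y hy => ?_).csInf_eq
    linarith [hgap y hy, (div_le_iff₀ hpos).2 hδε]
  have haff : ∀ δ, 0 ≤ δ → δ ≤ ε * argmaxMass F π →
      ellVal g P α π Φ r δ = ellVal g P α π Φ r 0 - δ / ((1 - α) * argmaxMass F π) :=
    fun δ hδ0 hδε => by
      rw [hval δ hδ0 hδε, hval 0 le_rfl (by positivity)]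
      field_simp
      ring
  refine ⟨hasDerivWithinAt_Ici_of_eq_affine (mul_pos hε hpos) fun δ hδ => ?_,
    ε * argmaxMass F π, mul_pos hε hpos, haff⟩
  rw [haff δ hδ.1 hδ.2]
  ring

/-- the right derivative of ℓ(r,·) at θ = 0 equals
-((1-α) π_{μ*,ν}(Ω(r)))⁻¹, and in fact ℓ(r,δ) is affine in δ near 0. -/
theorem ell_right_derivative_at_zero
    {X A : Type*} [Fintype X] [Nonempty X] [Fintype A] [Nonempty A] [DecidableEq X] {K : ℕ}
    (g : X → A → ℝ) (P : A → X → X → ℝ) (α : ℝ)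
    (hα0 : 0 < α) (hα1 : α < 1)
    (hP0 : ∀ a x x', 0 ≤ P a x x') (hP1 : ∀ a x, ∑ x', P a x x' = 1)
    (Jstar : X → ℝ) (hJstar : bellmanT g P α Jstar = Jstar)
    (μs : X → A) (hμs : polT g P α μs Jstar = bellmanT g P α Jstar)
    (ν : X → ℝ) (hν0 : ∀ x, 0 ≤ ν x) (hν1 : ∑ x, ν x = 1)
    (Φ : X → Fin K → ℝ) (r : Fin K → ℝ)
    -- Ω(r) = argmax_x (Φr(x) - TΦr(x)), and its π_{μ*,ν}-probability:
    (pOmega : ℝ)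
    (hpOmega : pOmega = ∑ x, Set.indicator
      {y | ∀ y', phiR Φ r y' - bellmanT g P α (phiR Φ r) y' ≤
                 phiR Φ r y - bellmanT g P α (phiR Φ r) y}
      (piDist P α μs ν) x)
    (hpos : 0 < pOmega) :
    HasDerivWithinAt (fun θ => ellVal g P α (piDist P α μs ν) Φ r θ)
      (-((1 - α) * pOmega)⁻¹) (Set.Ici 0) 0 ∧
    ∃ δ₀ > 0, ∀ δ : ℝ, 0 ≤ δ → δ ≤ δ₀ →
      ellVal g P α (piDist P α μs ν) Φ r δ =
        ellVal g P α (piDist P α μs ν) Φ r 0 - δ / ((1 - α) * pOmega) :=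
  ell_right_derivative_at_zero_general g P α hα0 hα1 hP0 μs ν hν0 Φ r pOmega hpOmega hpos
end
end

section
/- Suppose r_SALP is an optimal solution to the SALP with constraint violation distribution π_{μ*,ν} and violation budget θ ≥ 0, and let r* minimize ||J* − Φr||_∞ over r ∈ ℝ^K. Then ||J* − Φ r_SALP||_{1,ν} ≤ ||J* − Φr*||_∞ + ℓ(r*,θ) + 2θ/(1−α). -/
open Finset Matrix

noncomputable section

/-! With `Δ = Σ_k (α P_{μ*})^k = (I - α P_{μ*})⁻¹ ≥ 0`, any `J ≤ TJ + s` satisfies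
`J - J* ≤ α P_{μ*} (J - J*) + s` (as `T ≤ T_{μ*}` and `T_{μ*} J* = J*`), hence `J - J* ≤ Δ s`.
For the SALP solution the overshoot `Φ r_SALP - J*` is thus at most `Δ s̄`, whose `ν`-average is
`π_{μ*,ν}^⊤ s̄ / (1 - α) ≤ θ / (1 - α)`; so `‖J* - Φ r_SALP‖_{1,ν}` exceeds `ν^⊤ (J* - Φ r_SALP)`
by at most `2θ / (1 - α)`. Conversely, if `(s, γ)` is feasible for the LP defining `ℓ(r*, θ)`,
then lowering `Φ r*` by the constant `γ / (1 - α)` lowers `TΦ r*` by only `α γ / (1 - α)`, which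
makes it SALP-feasible with slack `s`; optimality of `r_SALP` then gives
`ν^⊤ (J* - Φ r_SALP) ≤ ν^⊤ (J* - Φ r*) + γ / (1 - α) ≤ ‖J* - Φ r*‖_∞ + γ / (1 - α)`. -/

namespace Matrix

theorem mulVec_mono_of_nonneg {m n R : Type*} [Fintype n] [Semiring R] [PartialOrder R]
    [IsOrderedRing R] {D : Matrix m n R} (hD : ∀ i j, 0 ≤ D i j) {u v : n → R} (huv : u ≤ v) :
    D *ᵥ u ≤ D *ᵥ v := fun i =>
  Finset.sum_le_sum fun j _ => mul_le_mul_of_nonneg_left (huv j) (hD i j)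

variable {n : Type*} [Fintype n] [DecidableEq n] {M : Matrix n n ℝ} {α : ℝ}

theorem summable_smul_pow_of_mem_rowStochastic (hM : M ∈ rowStochastic ℝ n) (hα0 : 0 ≤ α)
    (hα1 : α < 1) : Summable fun k : ℕ => (α • M) ^ k := by
  refine Pi.summable.2 fun i => Pi.summable.2 fun j => ?_
  simp_rw [smul_pow, smul_apply, smul_eq_mul]
  exact (summable_geometric_of_lt_one hα0 hα1).of_nonneg_of_le
    (fun k => mul_nonneg (pow_nonneg hα0 k) (nonneg_of_mem_rowStochastic (pow_mem hM k)))
    fun k => mul_le_of_le_one_right (pow_nonneg hα0 k) (le_one_of_mem_rowStochastic (pow_mem hM k))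

theorem tsum_smul_pow_nonneg_of_mem_rowStochastic (hM : M ∈ rowStochastic ℝ n) (hα0 : 0 ≤ α)
    (hα1 : α < 1) (i j : n) : 0 ≤ (∑' k : ℕ, (α • M) ^ k) i j := by
  have hsum := (summable_smul_pow_of_mem_rowStochastic hM hα0 hα1).hasSum
  refine (Pi.hasSum.1 (Pi.hasSum.1 hsum i) j).nonneg fun k => ?_
  rw [smul_pow]
  exact mul_nonneg (pow_nonneg hα0 k) (nonneg_of_mem_rowStochastic (pow_mem hM k))

theorem le_tsum_smul_pow_mulVec (hM : M ∈ rowStochastic ℝ n) (hα0 : 0 ≤ α) (hα1 : α < 1)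
    {e s : n → ℝ} (h : e ≤ (α • M) *ᵥ e + s) : e ≤ (∑' k : ℕ, (α • M) ^ k) *ᵥ s := by
  calc e = (∑' k : ℕ, (α • M) ^ k) *ᵥ ((1 - α • M) *ᵥ e) := by
        rw [mulVec_mulVec, (summable_smul_pow_of_mem_rowStochastic hM hα0 hα1).tsum_pow_mul_one_sub,
          one_mulVec]
    _ ≤ _ := by
        refine mulVec_mono_of_nonneg (tsum_smul_pow_nonneg_of_mem_rowStochastic hM hα0 hα1) ?_
        rw [sub_mulVec, one_mulVec]
        exact sub_le_iff_le_add'.2 h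

end Matrix

section MDP

variable {X A : Type*} [Fintype X] {g : X → A → ℝ} {P : A → X → X → ℝ} {α : ℝ}

theorem polMat_mem_rowStochastic [DecidableEq X] (hP0 : ∀ a x x', 0 ≤ P a x x')
    (hP1 : ∀ a x, ∑ x', P a x x' = 1) (μ : X → A) : polMat P μ ∈ Matrix.rowStochastic ℝ X :=
  Matrix.mem_rowStochastic_iff_sum.2 ⟨fun x => hP0 (μ x) x, fun x => hP1 (μ x) x⟩

theorem bellmanT_le_polT [Fintype A] [Nonempty A] (μ : X → A) (J : X → ℝ) :
    bellmanT g P α J ≤ polT g P α μ J := fun x =>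
  Finset.inf'_le _ (Finset.mem_univ (μ x))

theorem polT_sub_polT (μ : X → A) (J J' : X → ℝ) :
    polT g P α μ J - polT g P α μ J' = (α • polMat P μ) *ᵥ (J - J') := by
  rw [Matrix.smul_mulVec]
  ext x
  simp only [polT, Pi.sub_apply, Pi.smul_apply, smul_eq_mul, Matrix.mulVec, dotProduct, polMat,
    Matrix.of_apply, mul_sub, Finset.sum_sub_distrib]
  ring

theorem bellmanT_sub_const [Fintype A] [Nonempty A] (hP1 : ∀ a x, ∑ x', P a x x' = 1)
    (J : X → ℝ) (c : ℝ) (x : X) :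
    bellmanT g P α (fun y => J y - c) x = bellmanT g P α J x - α * c := by
  have hshift : ∀ a, g x a + α * ∑ x', P a x x' * (J x' - c) =
      g x a + α * ∑ x', P a x x' * J x' - α * c := fun a => by
    simp only [mul_sub, Finset.sum_sub_distrib, ← Finset.sum_mul, hP1 a x]
    ring
  simp only [bellmanT, hshift]
  exact (Finset.apply_inf'_eq_inf'_comp _ (· - α * c) fun a b =>
    (min_sub_sub_right a b _).symm).symm

theorem sub_le_deltaMat_mulVec [DecidableEq X] [Fintype A] [Nonempty A]
    (hP0 : ∀ a x x', 0 ≤ P a x x') (hP1 : ∀ a x, ∑ x', P a x x' = 1) (hα0 : 0 ≤ α) (hα1 : α < 1)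
    {μ : X → A} {Jstar J s : X → ℝ} (hJstar : polT g P α μ Jstar = Jstar)
    (hJ : ∀ x, J x ≤ bellmanT g P α J x + s x) : J - Jstar ≤ deltaMat P α μ *ᵥ s := by
  refine Matrix.le_tsum_smul_pow_mulVec (polMat_mem_rowStochastic hP0 hP1 μ) hα0 hα1 fun x => ?_
  have hT := bellmanT_le_polT (g := g) (P := P) (α := α) μ J x
  have hdiff := congrFun (polT_sub_polT (g := g) (P := P) (α := α) μ J Jstar) x
  rw [hJstar] at hdiff
  simp only [Pi.sub_apply, Pi.add_apply] at hdiff ⊢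
  linarith [hJ x]

theorem sum_piDist_mul [DecidableEq X] (μ : X → A) (ν s : X → ℝ) :
    ∑ x, piDist P α μ ν x * s x = (1 - α) * ∑ x, ν x * (deltaMat P α μ *ᵥ s) x := by
  simp only [piDist, Matrix.mulVec, dotProduct, Finset.mul_sum, Finset.sum_mul]
  rw [Finset.sum_comm]
  exact Finset.sum_congr rfl fun _ _ => Finset.sum_congr rfl fun _ _ => by ring

end MDP

section SALP

variable {X A : Type*} {K : ℕ}

def IsSALPFeasible [Fintype X] [Fintype A] [Nonempty A] (g : X → A → ℝ) (P : A → X → X → ℝ) (α : ℝ)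
    (π : X → ℝ) (Φ : X → Fin K → ℝ) (θ : ℝ) (r : Fin K → ℝ) (s : X → ℝ) : Prop :=
  (∀ x, phiR Φ r x ≤ bellmanT g P α (phiR Φ r) x + s x) ∧ (∑ x, π x * s x ≤ θ) ∧ ∀ x, 0 ≤ s x

variable {Φ : X → Fin K → ℝ}

theorem phiR_sub_smul (r r1 : Fin K → ℝ) (c : ℝ) (x : X) :
    phiR Φ (r - c • r1) x = phiR Φ r x - c * phiR Φ r1 x := by
  simp only [phiR, Pi.sub_apply, Pi.smul_apply, smul_eq_mul, mul_sub, Finset.sum_sub_distrib,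
    Finset.mul_sum]
  exact congrArg _ (Finset.sum_congr rfl fun _ _ => by ring)

variable [Fintype X]

theorem sum_mul_le_supNorm [Nonempty X] {ν : X → ℝ} (hν0 : ∀ x, 0 ≤ ν x) (hν1 : ∑ x, ν x = 1)
    (J : X → ℝ) : ∑ x, ν x * J x ≤ supNorm J :=
  calc ∑ x, ν x * J x ≤ ∑ x, ν x * supNorm J := Finset.sum_le_sum fun x _ =>
        mul_le_mul_of_nonneg_left
          ((le_abs_self _).trans (Finset.le_sup' (fun x => |J x|) (Finset.mem_univ x))) (hν0 x)
    _ = supNorm J := by rw [← Finset.sum_mul, hν1, one_mul]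

theorem wnorm1_le_sum_mul_add {ν e c : X → ℝ} (hν0 : ∀ x, 0 ≤ ν x) (hc0 : ∀ x, 0 ≤ c x)
    (hec : ∀ x, -e x ≤ c x) : wnorm1 ν e ≤ ∑ x, ν x * e x + 2 * ∑ x, ν x * c x := by
  rw [Finset.mul_sum, ← Finset.sum_add_distrib]
  refine Finset.sum_le_sum fun x _ => ?_
  have habs : |e x| ≤ e x + 2 * c x := abs_le'.2 ⟨by linarith [hc0 x], by linarith [hec x]⟩
  nlinarith [hν0 x]

variable [Fintype A] [Nonempty A] {g : X → A → ℝ} {P : A → X → X → ℝ} {α : ℝ} {π : X → ℝ}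
  {θ : ℝ}

theorem ellSet_nonempty (hθ : 0 ≤ θ) (r : Fin K → ℝ) : (ellSet g P α π Φ r θ).Nonempty := by
  refine ⟨_, 0, ∑ y, |phiR Φ r y - bellmanT g P α (phiR Φ r) y|, rfl, fun x => ?_,
    by simpa using hθ, fun _ => le_rfl⟩
  rw [Pi.zero_apply, zero_add]
  exact (le_abs_self _).trans
    (Finset.single_le_sum (f := fun y => |phiR Φ r y - bellmanT g P α (phiR Φ r) y|)
      (fun y _ => abs_nonneg _) (Finset.mem_univ x))

theorem isSALPFeasible_sub_smul_of_mem_ellSet (hP1 : ∀ a x, ∑ x', P a x x' = 1) (hα1 : α ≠ 1)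
    {r r1 : Fin K → ℝ} (hr1 : ∀ x, phiR Φ r1 x = 1) {v : ℝ} (hv : v ∈ ellSet g P α π Φ r θ) :
    ∃ s, IsSALPFeasible g P α π Φ θ (r - v • r1) s := by
  obtain ⟨s, γ, rfl, hviol, hbudget, hs0⟩ := hv
  refine ⟨s, fun x => ?_, hbudget, hs0⟩
  have hshift : phiR Φ (r - (γ / (1 - α)) • r1) = fun y => phiR Φ r y - γ / (1 - α) :=
    funext fun y => by rw [phiR_sub_smul, hr1, mul_one]
  have hγ : γ / (1 - α) - α * (γ / (1 - α)) = γ := by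
    field_simp [sub_ne_zero.2 hα1.symm]
  rw [hshift, bellmanT_sub_const hP1]
  linarith [hviol x]

theorem sum_mul_phiR_sub_le_of_mem_ellSet (hP1 : ∀ a x, ∑ x', P a x x' = 1) (hα1 : α ≠ 1)
    {ν : X → ℝ} (hν1 : ∑ x, ν x = 1) {r r1 rSALP : Fin K → ℝ} (hr1 : ∀ x, phiR Φ r1 x = 1)
    (hopt : ∀ r s, IsSALPFeasible g P α π Φ θ r s →
      ∑ x, ν x * phiR Φ r x ≤ ∑ x, ν x * phiR Φ rSALP x)
    {v : ℝ} (hv : v ∈ ellSet g P α π Φ r θ) :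
    ∑ x, ν x * phiR Φ r x - v ≤ ∑ x, ν x * phiR Φ rSALP x := by
  obtain ⟨s, hs⟩ := isSALPFeasible_sub_smul_of_mem_ellSet hP1 hα1 hr1 hv
  have hobj : ∑ x, ν x * phiR Φ (r - v • r1) x = ∑ x, ν x * phiR Φ r x - v := by
    simp only [phiR_sub_smul, hr1, mul_one, mul_sub, Finset.sum_sub_distrib, ← Finset.sum_mul,
      hν1, one_mul]
  exact hobj ▸ hopt _ _ hs

end SALP

theorem salp_simple_approximation_guarantee_general
    {X A : Type*} [Fintype X] [Nonempty X] [Fintype A] [Nonempty A] [DecidableEq X] {K : ℕ}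
    (g : X → A → ℝ) (P : A → X → X → ℝ) (α : ℝ)
    (hα0 : 0 < α) (hα1 : α < 1)
    (hP0 : ∀ a x x', 0 ≤ P a x x') (hP1 : ∀ a x, ∑ x', P a x x' = 1)
    (Jstar : X → ℝ) (hJstar : bellmanT g P α Jstar = Jstar)
    (μs : X → A) (hμs : polT g P α μs Jstar = bellmanT g P α Jstar)
    (ν : X → ℝ) (hν0 : ∀ x, 0 ≤ ν x) (hν1 : ∑ x, ν x = 1)
    (Φ : X → Fin K → ℝ)
    (hone : ∃ r1 : Fin K → ℝ, ∀ x, phiR Φ r1 x = 1)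
    (θ : ℝ) (hθ : 0 ≤ θ)
    -- (r_SALP, s̄) is an optimal solution of the SALP (3.1):
    (rSALP : Fin K → ℝ) (sbar : X → ℝ)
    (hfeas : (∀ x, phiR Φ rSALP x ≤ bellmanT g P α (phiR Φ rSALP) x + sbar x) ∧
      (∑ x, piDist P α μs ν x * sbar x ≤ θ) ∧ (∀ x, 0 ≤ sbar x))
    (hopt : ∀ (r : Fin K → ℝ) (s : X → ℝ),
      (∀ x, phiR Φ r x ≤ bellmanT g P α (phiR Φ r) x + s x) →
      (∑ x, piDist P α μs ν x * s x ≤ θ) → (∀ x, 0 ≤ s x) →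
      ∑ x, ν x * phiR Φ r x ≤ ∑ x, ν x * phiR Φ rSALP x)
    (rstar : Fin K → ℝ) :
    wnorm1 ν (fun x => Jstar x - phiR Φ rSALP x) ≤
      supNorm (fun x => Jstar x - phiR Φ rstar x) +
      ellVal g P α (piDist P α μs ν) Φ rstar θ + 2 * θ / (1 - α) := by
  obtain ⟨r1, hr1⟩ := hone
  obtain ⟨hsalp, hbudget, hsbar0⟩ := hfeas
  set c := deltaMat P α μs *ᵥ sbar
  have hgap : phiR Φ rSALP - Jstar ≤ c :=
    sub_le_deltaMat_mulVec hP0 hP1 hα0.le hα1 (hμs.trans hJstar) hsalp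
  have hc0 : ∀ x, 0 ≤ c x := fun x => Finset.sum_nonneg fun y _ =>
    mul_nonneg (Matrix.tsum_smul_pow_nonneg_of_mem_rowStochastic
      (polMat_mem_rowStochastic hP0 hP1 μs) hα0.le hα1 x y) (hsbar0 y)
  have hνc : ∑ x, ν x * c x ≤ θ / (1 - α) := by
    rw [le_div_iff₀ (sub_pos.2 hα1), mul_comm, ← sum_piDist_mul]
    exact hbudget
  have hwnorm := wnorm1_le_sum_mul_add (e := fun x => Jstar x - phiR Φ rSALP x) hν0 hc0
    fun x => (neg_sub _ _).trans_le (hgap x)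
  have hsup := sum_mul_le_supNorm hν0 hν1 fun x => Jstar x - phiR Φ rstar x
  have hℓ : ∑ x, ν x * phiR Φ rstar x - ∑ x, ν x * phiR Φ rSALP x ≤
      ellVal g P α (piDist P α μs ν) Φ rstar θ :=
    le_csInf (ellSet_nonempty hθ rstar) fun v hv => by
      linarith [sum_mul_phiR_sub_le_of_mem_ellSet hP1 hα1.ne hν1 hr1
        (fun r s hs => hopt r s hs.1 hs.2.1 hs.2.2) hv]
  simp only [mul_sub, Finset.sum_sub_distrib] at hwnorm hsup
  rw [mul_div_assoc]
  linarith

/-- Theorem 1: if r_SALP is optimal for the SALP with violation distribution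
π_{μ*,ν} and budget θ, and r* minimizes ‖J* - Φr‖_∞, then
‖J* - Φ r_SALP‖_{1,ν} ≤ ‖J* - Φr*‖_∞ + ℓ(r*,θ) + 2θ/(1-α). -/
theorem salp_simple_approximation_guarantee
    {X A : Type*} [Fintype X] [Nonempty X] [Fintype A] [Nonempty A] [DecidableEq X] {K : ℕ}
    (g : X → A → ℝ) (P : A → X → X → ℝ) (α : ℝ)
    (hα0 : 0 < α) (hα1 : α < 1)
    (hP0 : ∀ a x x', 0 ≤ P a x x') (hP1 : ∀ a x, ∑ x', P a x x' = 1)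
    (Jstar : X → ℝ) (hJstar : bellmanT g P α Jstar = Jstar)
    (μs : X → A) (hμs : polT g P α μs Jstar = bellmanT g P α Jstar)
    (ν : X → ℝ) (hν0 : ∀ x, 0 ≤ ν x) (hν1 : ∑ x, ν x = 1)
    (Φ : X → Fin K → ℝ)
    (hone : ∃ r1 : Fin K → ℝ, ∀ x, phiR Φ r1 x = 1)
    (θ : ℝ) (hθ : 0 ≤ θ)
    -- (r_SALP, s̄) is an optimal solution of the SALP (3.1):
    (rSALP : Fin K → ℝ) (sbar : X → ℝ)
    (hfeas : (∀ x, phiR Φ rSALP x ≤ bellmanT g P α (phiR Φ rSALP) x + sbar x) ∧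
      (∑ x, piDist P α μs ν x * sbar x ≤ θ) ∧ (∀ x, 0 ≤ sbar x))
    (hopt : ∀ (r : Fin K → ℝ) (s : X → ℝ),
      (∀ x, phiR Φ r x ≤ bellmanT g P α (phiR Φ r) x + s x) →
      (∑ x, piDist P α μs ν x * s x ≤ θ) → (∀ x, 0 ≤ s x) →
      ∑ x, ν x * phiR Φ r x ≤ ∑ x, ν x * phiR Φ rSALP x)
    -- r* minimizes ‖J* - Φr‖_∞:
    (rstar : Fin K → ℝ)
    (hrstar : ∀ r : Fin K → ℝ,
      supNorm (fun x => Jstar x - phiR Φ rstar x) ≤ supNorm (fun x => Jstar x - phiR Φ r x)) :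
    wnorm1 ν (fun x => Jstar x - phiR Φ rSALP x) ≤
      supNorm (fun x => Jstar x - phiR Φ rstar x) +
      ellVal g P α (piDist P α μs ν) Φ rstar θ + 2 * θ / (1 - α) :=
  salp_simple_approximation_guarantee_general g P α hα0 hα1 hP0 hP1 Jstar hJstar μs hμs ν hν0 hν1 Φ
    hone θ hθ rSALP sbar hfeas hopt rstar
end
end
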